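/- Let d ≥ 2, let (U, 𝔘) be a measurable space with a σ-finite measure ν, and let δ₀, R, κ > 0. Let ϱ : [0,∞) → [0,∞) be continuous, nondecreasing, concave, with ϱ(r) > 0 for r > 0 and ϱ(r) ≤ (1+r)²·ϱ(r/(1+r)) for all r > 0. For each k ∈ {1,2,3,…} let b(·,k) : ℝ^d → ℝ^d, σ(·,k) : ℝ^d → ℝ^{d×d}, c(·,k,·) : ℝ^d × U → ℝ^d (with u ↦ c(x,k,u) measurable), and let q_{kl} : ℝ^d → [0,∞) for l ≠ k. Assume: (a) for all k and all x, z with |x| ∨ |z| ≤ R and |x−z| ≤ δ₀: ∫_U min( |c(x,k,u)−c(z,k,u)|², 4|x−z|·|c(x,k,u)−c(z,k,u)| ) ν(du) + 2⟨x−z, b(x,k)−b(z,k)⟩ + ‖σ(x,k)−σ(z,k)‖² ≤ 2κ·|x−z|·ϱ(|x−z|) (‖·‖ the Frobenius norm); (b) for all k and all x, z with |x| ∨ |z| ≤ R: Σ_{l≠k} |q_{kl}(x) − q_{kl}(z)| ≤ κ·ϱ(F(|x−z|)). Then for all k and all x, z with |x| ∨ |z| ≤ R, 0 < |x−z| ≤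 δ₀: (1/2)·tr( (σ(x,k)−σ(z,k))(σ(x,k)−σ(z,k))ᵀ ∇²G(x−z) ) + ⟨b(x,k)−b(z,k), ∇G(x−z)⟩ + ∫_U [ G(x−z+c(x,k,u)−c(z,k,u)) − G(x−z) − ⟨∇G(x−z), c(x,k,u)−c(z,k,u)⟩ ] ν(du) + Σ_{l≠k} |q_{kl}(x) − q_{kl}(z)| ≤ 2κ·ϱ(F(|x−z|)). -/

import Mathlib

open MeasureTheory Matrix
open scoped RealInnerProductSpace

/-- `F r = r / (1 + r)`. -/
noncomputable def F (r : ℝ) : ℝ := r / (1 + r)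

/-- `G w = |w| / (1 + |w|)` on `ℝ^d`. -/
noncomputable def G (d : ℕ) (w : EuclideanSpace ℝ (Fin d)) : ℝ := ‖w‖ / (1 + ‖w‖)

/-- The gradient `∇G`. -/
noncomputable def gradG (d : ℕ) (w : EuclideanSpace ℝ (Fin d)) : EuclideanSpace ℝ (Fin d) :=
  gradient (G d) w

/-- The Hessian matrix `∇²G`. -/
noncomputable def hessG (d : ℕ) (w : EuclideanSpace ℝ (Fin d)) : Matrix (Fin d) (Fin d) ℝ :=
  Matrix.of fun i j =>
    iteratedFDeriv ℝ 2 (G d) w ![EuclideanSpace.single i 1, EuclideanSpace.single j 1]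

/-!
Put `w = x - z`, `r = ‖w‖` and `a = (r (1 + r)²)⁻¹`. Then `∇G(w) = a w` and
`∇²G(w) = a I - (1 + 3r) / (r³ (1 + r)³) w wᵀ`, so the diffusion term is at most `a/2 ‖Δσ‖²` and
the drift term is `a/2 · 2⟪w, Δb⟫`. With `s = ‖w + h‖` and `t = ‖h‖`, the jump integrand equals
`a/2 (t² - (s - r)²) - (s - r)² / ((1 + s)(1 + r)²) ≤ a/2 · min (t², 4rt)`.
Hence the first three terms are bounded by `a/2` times the left side of (a), that is by
`κ ϱ(r) / (1 + r)² ≤ κ ϱ(F r)` thanks to the growth condition on `ϱ`; (b) supplies the other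
`κ ϱ(F r)`.
-/

section InnerProductSpace

variable {E : Type*} [NormedAddCommGroup E] [InnerProductSpace ℝ E]

theorem hasFDerivAt_norm_of_ne_zero {w : E} (hw : w ≠ 0) :
    HasFDerivAt (‖·‖) (‖w‖⁻¹ • innerSL ℝ w) w := by
  have hw' : 0 < ‖w‖ := norm_pos_iff.2 hw
  have h : HasFDerivAt (fun y : E => √(‖y‖ ^ 2)) _ w :=
    (Real.hasDerivAt_sqrt (pow_pos hw' 2).ne').comp_hasFDerivAt w
      (hasStrictFDerivAt_norm_sq w).hasFDerivAt
  simp only [Real.sqrt_sq (norm_nonneg _)] at h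
  refine h.congr_fderiv ?_
  ext v
  simp only [one_div, _root_.mul_inv_rev, _root_.smul_apply, coe_innerSL_apply, nsmul_eq_mul,
    Nat.cast_ofNat, smul_eq_mul]
  field_simp

theorem HasDerivAt.hasFDerivAt_comp_norm {φ : ℝ → ℝ} {φ' : ℝ} {w : E} (hφ : HasDerivAt φ φ' ‖w‖)
    (hw : w ≠ 0) : HasFDerivAt (fun y => φ ‖y‖) ((φ' / ‖w‖) • innerSL ℝ w) w :=
  (hφ.comp_hasFDerivAt w (hasFDerivAt_norm_of_ne_zero hw)).congr_fderiv
    (by rw [smul_smul, div_eq_mul_inv])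

end InnerProductSpace

theorem hasDerivAt_div_one_add {r : ℝ} (hr : 0 ≤ r) :
    HasDerivAt (fun s => s / (1 + s)) ((1 + r) ^ 2)⁻¹ r := by
  have h := (hasDerivAt_id' r).div ((hasDerivAt_id' r).const_add 1) (by positivity)
  exact h.congr_deriv (by field_simp; ring)

theorem hasDerivAt_inv_mul_one_add_sq {r : ℝ} (hr : 0 < r) :
    HasDerivAt (fun s => (s * (1 + s) ^ 2)⁻¹) (-(1 + 3 * r) / (r ^ 2 * (1 + r) ^ 3)) r := by
  have h : HasDerivAt (fun s => s * (1 + s) ^ 2) _ r :=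
    (hasDerivAt_id' r).mul (((hasDerivAt_id' r).const_add 1).pow 2)
  exact (h.inv (by positivity)).congr_deriv (by field_simp; ring)

theorem sq_sub_sq_sub_le_min {r s t : ℝ} (hst : |s - r| ≤ t) (htr : t ≤ s + r) :
    t ^ 2 - (s - r) ^ 2 ≤ min (t ^ 2) (4 * r * t) := by
  obtain ⟨h₁, h₂⟩ := abs_le.1 hst
  refine le_min (by nlinarith) ?_
  nlinarith [mul_le_mul (by linarith : t - (s - r) ≤ 2 * r) (by linarith : t + (s - r) ≤ 2 * t)
    (by linarith) (by linarith)]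

theorem sq_sub_div_le_min {r s t : ℝ} (hr : 0 ≤ r) (hs : 0 ≤ s) (hst : |s - r| ≤ t) :
    (s - r) ^ 2 / ((1 + s) * (1 + r) ^ 2) ≤ min (t ^ 2) t := by
  have hden : 1 ≤ (1 + s) * (1 + r) ^ 2 := by nlinarith [mul_nonneg hs hr]
  have hsq : (s - r) ^ 2 ≤ t ^ 2 := sq_le_sq' (abs_le.1 hst).1 (abs_le.1 hst).2
  have habs : |s - r| ≤ (1 + s) * (1 + r) ^ 2 := by
    rw [abs_le]; constructor <;> nlinarith [mul_nonneg hs hr, mul_nonneg (mul_nonneg hs hr) hr]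
  refine le_min ?_ ?_ <;> rw [div_le_iff₀ (by linarith)]
  · nlinarith [mul_le_mul_of_nonneg_left hden (sq_nonneg t)]
  rw [← sq_abs]
  nlinarith [mul_le_mul hst habs (abs_nonneg _) ((abs_nonneg _).trans hst)]

theorem trace_mul_transpose_self {n : Type*} [Fintype n] (A : Matrix n n ℝ) :
    trace (A * Aᵀ) = ∑ i, ∑ j, A i j ^ 2 := by
  simp [trace, mul_apply, sq]

theorem trace_mul_transpose_mul_vecMulVec_nonneg {n : Type*} [Fintype n] (A : Matrix n n ℝ)
    (v : n → ℝ) : 0 ≤ trace (A * Aᵀ * vecMulVec v v) := by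
  rw [mul_vecMulVec, trace_vecMulVec, dotProduct_comm, ← mulVec_mulVec, dotProduct_mulVec,
    ← mulVec_transpose]
  exact dotProduct_self_star_nonneg _

theorem trace_mul_transpose_mul_sub_vecMulVec_le {n : Type*} [Fintype n] [DecidableEq n]
    (A : Matrix n n ℝ) (v : n → ℝ) (α : ℝ) {β : ℝ} (hβ : 0 ≤ β) :
    trace (A * Aᵀ * (α • 1 - β • vecMulVec v v)) ≤ α * ∑ i, ∑ j, A i j ^ 2 := by
  rw [mul_sub, mul_smul_comm, mul_smul_comm, mul_one, trace_sub, trace_smul, trace_smul,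
    trace_mul_transpose_self, smul_eq_mul, smul_eq_mul, sub_le_self_iff]
  exact mul_nonneg hβ (trace_mul_transpose_mul_vecMulVec_nonneg A v)

section G

variable {d : ℕ}

theorem continuous_G : Continuous (G d) :=
  continuous_norm.div (continuous_const.add continuous_norm) fun w => by positivity

theorem hasFDerivAt_G {w : EuclideanSpace ℝ (Fin d)} (hw : w ≠ 0) :
    HasFDerivAt (G d) ((‖w‖ * (1 + ‖w‖) ^ 2)⁻¹ • innerSL ℝ w) w :=
  ((hasDerivAt_div_one_add (norm_nonneg w)).hasFDerivAt_comp_norm hw).congr_fderiv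
    (by rw [div_eq_mul_inv, ← mul_inv, mul_comm])

theorem gradG_eq {w : EuclideanSpace ℝ (Fin d)} (hw : w ≠ 0) :
    gradG d w = (‖w‖ * (1 + ‖w‖) ^ 2)⁻¹ • w := by
  refine HasGradientAt.gradient ?_
  rw [hasGradientAt_iff_hasFDerivAt]
  refine (hasFDerivAt_G hw).congr_fderiv ?_
  ext y
  simp [InnerProductSpace.toDual_apply_apply]

theorem fderiv_fderiv_G_apply {w : EuclideanSpace ℝ (Fin d)} (hw : w ≠ 0)
    (v₁ v₂ : EuclideanSpace ℝ (Fin d)) :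
    fderiv ℝ (fderiv ℝ (G d)) w v₁ v₂ = (‖w‖ * (1 + ‖w‖) ^ 2)⁻¹ * ⟪v₁, v₂⟫ -
      (1 + 3 * ‖w‖) / (‖w‖ ^ 3 * (1 + ‖w‖) ^ 3) * (⟪w, v₁⟫ * ⟪w, v₂⟫) := by
  have hfd : fderiv ℝ (G d) =ᶠ[nhds w] fun y => (‖y‖ * (1 + ‖y‖) ^ 2)⁻¹ • innerSL ℝ y := by
    filter_upwards [isOpen_ne.mem_nhds hw] with y hy using (hasFDerivAt_G hy).fderiv
  have h : HasFDerivAt (fun y => (‖y‖ * (1 + ‖y‖) ^ 2)⁻¹ • innerSL ℝ y) _ w :=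
    ((hasDerivAt_inv_mul_one_add_sq (norm_pos_iff.2 hw)).hasFDerivAt_comp_norm hw).smul
      (innerSL ℝ : _ →L[ℝ] _ →L[ℝ] ℝ).hasFDerivAt
  rw [hfd.fderiv_eq, h.fderiv]
  -- the `innerSL` simp lemmas do not fire on `innerSL ℝ` retyped as an `ℝ`-linear map
  have hB : (innerSL ℝ : EuclideanSpace ℝ (Fin d) →L[ℝ] _ →L[ℝ] ℝ) v₁ v₂ = ⟪v₁, v₂⟫ := rfl
  simp only [_root_.mul_inv_rev, neg_add_rev, _root_.add_apply, _root_.smul_apply,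
    ContinuousLinearMap.smulRight_apply, coe_innerSL_apply, smul_eq_mul, hB]
  field_simp
  ring

theorem hessG_eq {w : EuclideanSpace ℝ (Fin d)} (hw : w ≠ 0) :
    hessG d w = (‖w‖ * (1 + ‖w‖) ^ 2)⁻¹ • 1 -
      ((1 + 3 * ‖w‖) / (‖w‖ ^ 3 * (1 + ‖w‖) ^ 3)) • vecMulVec ⇑w ⇑w := by
  ext i j
  simp [hessG, iteratedFDeriv_two_apply, fderiv_fderiv_G_apply hw,
    EuclideanSpace.inner_single_right, one_apply, vecMulVec_apply, eq_comm]

theorem trace_mul_transpose_mul_hessG_le (A : Matrix (Fin d) (Fin d) ℝ)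
    {w : EuclideanSpace ℝ (Fin d)} (hw : w ≠ 0) :
    trace (A * Aᵀ * hessG d w) ≤ (‖w‖ * (1 + ‖w‖) ^ 2)⁻¹ * ∑ i, ∑ j, A i j ^ 2 := by
  rw [hessG_eq hw]
  exact trace_mul_transpose_mul_sub_vecMulVec_le _ _ _ (by positivity)

theorem G_add_sub_G_sub_inner_gradG {w : EuclideanSpace ℝ (Fin d)} (hw : w ≠ 0)
    (h : EuclideanSpace ℝ (Fin d)) :
    G d (w + h) - G d w - ⟪gradG d w, h⟫ =
      (‖w‖ * (1 + ‖w‖) ^ 2)⁻¹ / 2 * (‖h‖ ^ 2 - (‖w + h‖ - ‖w‖) ^ 2) -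
        (‖w + h‖ - ‖w‖) ^ 2 / ((1 + ‖w + h‖) * (1 + ‖w‖) ^ 2) := by
  have hinner : ⟪w, h⟫ = (‖w + h‖ ^ 2 - ‖w‖ ^ 2 - ‖h‖ ^ 2) / 2 := by
    rw [norm_add_sq_real]; ring
  rw [gradG_eq hw, real_inner_smul_left, hinner, G, G]
  field_simp
  ring

theorem G_add_sub_G_sub_inner_gradG_le {w : EuclideanSpace ℝ (Fin d)} (hw : w ≠ 0)
    (h : EuclideanSpace ℝ (Fin d)) :
    G d (w + h) - G d w - ⟪gradG d w, h⟫ ≤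
      (‖w‖ * (1 + ‖w‖) ^ 2)⁻¹ / 2 * min (‖h‖ ^ 2) (4 * ‖w‖ * ‖h‖) := by
  have hst : |‖w + h‖ - ‖w‖| ≤ ‖h‖ := by simpa using abs_norm_sub_norm_le (w + h) w
  have htr : ‖h‖ ≤ ‖w + h‖ + ‖w‖ := by simpa using norm_sub_le (w + h) w
  rw [G_add_sub_G_sub_inner_gradG hw]
  have hcorr : 0 ≤ (‖w + h‖ - ‖w‖) ^ 2 / ((1 + ‖w + h‖) * (1 + ‖w‖) ^ 2) := by positivity
  have hmain := mul_le_mul_of_nonneg_left (sq_sub_sq_sub_le_min hst htr)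
    (by positivity : 0 ≤ (‖w‖ * (1 + ‖w‖) ^ 2)⁻¹ / 2)
  linarith

theorem neg_min_le_G_add_sub_G_sub_inner_gradG {w : EuclideanSpace ℝ (Fin d)} (hw : w ≠ 0)
    (h : EuclideanSpace ℝ (Fin d)) :
    -min (‖h‖ ^ 2) ‖h‖ ≤ G d (w + h) - G d w - ⟪gradG d w, h⟫ := by
  have hst : |‖w + h‖ - ‖w‖| ≤ ‖h‖ := by simpa using abs_norm_sub_norm_le (w + h) w
  rw [G_add_sub_G_sub_inner_gradG hw]
  have hsq : 0 ≤ ‖h‖ ^ 2 - (‖w + h‖ - ‖w‖) ^ 2 :=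
    sub_nonneg.2 (sq_le_sq' (abs_le.1 hst).1 (abs_le.1 hst).2)
  have hmain : 0 ≤ (‖w‖ * (1 + ‖w‖) ^ 2)⁻¹ / 2 * (‖h‖ ^ 2 - (‖w + h‖ - ‖w‖) ^ 2) := by positivity
  linarith [sq_sub_div_le_min (norm_nonneg w) (norm_nonneg (w + h)) hst]

theorem abs_G_add_sub_G_sub_inner_gradG_le {w : EuclideanSpace ℝ (Fin d)} (hw : w ≠ 0)
    (h : EuclideanSpace ℝ (Fin d)) :
    |G d (w + h) - G d w - ⟪gradG d w, h⟫| ≤ (1 + ‖w‖⁻¹) * min (‖h‖ ^ 2) (4 * ‖w‖ * ‖h‖) := by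
  have hw' : 0 < ‖w‖ := norm_pos_iff.2 hw
  have hm : 0 ≤ min (‖h‖ ^ 2) (4 * ‖w‖ * ‖h‖) := by positivity
  have hcoef : (‖w‖ * (1 + ‖w‖) ^ 2)⁻¹ / 2 ≤ 1 + ‖w‖⁻¹ := by
    have : (‖w‖ * (1 + ‖w‖) ^ 2)⁻¹ ≤ ‖w‖⁻¹ :=
      inv_anti₀ hw' (le_mul_of_one_le_right hw'.le (one_le_pow₀ (by linarith)))
    linarith [inv_nonneg.2 (mul_nonneg hw'.le (sq_nonneg (1 + ‖w‖)))]
  have hlow : min (‖h‖ ^ 2) ‖h‖ ≤ (1 + ‖w‖⁻¹) * min (‖h‖ ^ 2) (4 * ‖w‖ * ‖h‖) := by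
    rcases le_total (‖h‖ ^ 2) (4 * ‖w‖ * ‖h‖) with hle | hle
    · rw [min_eq_left hle]
      nlinarith [min_le_left (‖h‖ ^ 2) ‖h‖, mul_nonneg (inv_nonneg.2 hw'.le) (sq_nonneg ‖h‖)]
    · rw [min_eq_right hle]
      have : ‖w‖⁻¹ * (4 * ‖w‖ * ‖h‖) = 4 * ‖h‖ := by field_simp
      nlinarith [min_le_right (‖h‖ ^ 2) ‖h‖, norm_nonneg h]
  rw [abs_le]
  constructor
  · linarith [neg_min_le_G_add_sub_G_sub_inner_gradG hw h]
  · exact (G_add_sub_G_sub_inner_gradG_le hw h).trans (mul_le_mul_of_nonneg_right hcoef hm)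

theorem integral_G_add_sub_G_sub_inner_gradG_le {U : Type*} [MeasurableSpace U] (ν : Measure U)
    {w : EuclideanSpace ℝ (Fin d)} (hw : w ≠ 0) {h : U → EuclideanSpace ℝ (Fin d)}
    (hh : AEStronglyMeasurable h ν)
    (hint : Integrable (fun u => min (‖h u‖ ^ 2) (4 * ‖w‖ * ‖h u‖)) ν) :
    ∫ u, (G d (w + h u) - G d w - ⟪gradG d w, h u⟫) ∂ν ≤
      (‖w‖ * (1 + ‖w‖) ^ 2)⁻¹ / 2 * ∫ u, min (‖h u‖ ^ 2) (4 * ‖w‖ * ‖h u‖) ∂ν := by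
  have hmeas : AEStronglyMeasurable (fun u => G d (w + h u) - G d w - ⟪gradG d w, h u⟫) ν :=
    ((continuous_G.comp_aestronglyMeasurable (hh.const_add w)).sub aestronglyMeasurable_const).sub
      ((innerSL ℝ (gradG d w)).continuous.comp_aestronglyMeasurable hh)
  have hJ : Integrable (fun u => G d (w + h u) - G d w - ⟪gradG d w, h u⟫) ν :=
    (hint.const_mul (1 + ‖w‖⁻¹)).mono' hmeas
      (ae_of_all _ fun u => abs_G_add_sub_G_sub_inner_gradG_le hw (h u))
  rw [← integral_const_mul]
  exact integral_mono hJ (hint.const_mul _) fun u => G_add_sub_G_sub_inner_gradG_le hw (h u)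

end G

theorem stmt_9_general (d : ℕ)
    {U : Type*} [MeasurableSpace U] (ν : Measure U)
    (δ₀ R κ : ℝ) (hκ : 0 < κ)
    (ϱ : ℝ → ℝ)
    (hϱF : ∀ r : ℝ, 0 < r → ϱ r ≤ (1 + r) ^ 2 * ϱ (r / (1 + r)))
    (b : EuclideanSpace ℝ (Fin d) → ℕ+ → EuclideanSpace ℝ (Fin d))
    (σ : EuclideanSpace ℝ (Fin d) → ℕ+ → Matrix (Fin d) (Fin d) ℝ)
    (c : EuclideanSpace ℝ (Fin d) → ℕ+ → U → EuclideanSpace ℝ (Fin d))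
    (q : ℕ+ → ℕ+ → EuclideanSpace ℝ (Fin d) → ℝ)
    (hmeas : ∀ x k, Measurable (c x k))
    -- (a)
    (hcoef : ∀ (k : ℕ+) (x z : EuclideanSpace ℝ (Fin d)),
      max ‖x‖ ‖z‖ ≤ R → ‖x - z‖ ≤ δ₀ →
      Integrable (fun u =>
        min (‖c x k u - c z k u‖ ^ 2) (4 * ‖x - z‖ * ‖c x k u - c z k u‖)) ν ∧
      (∫ u, min (‖c x k u - c z k u‖ ^ 2) (4 * ‖x - z‖ * ‖c x k u - c z k u‖) ∂ν) +
        2 * ⟪x - z, b x k - b z k⟫ + (∑ i, ∑ j, (σ x k i j - σ z k i j) ^ 2) ≤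
        2 * κ * ‖x - z‖ * ϱ ‖x - z‖)
    -- (b)
    (hq : ∀ (k : ℕ+) (x z : EuclideanSpace ℝ (Fin d)), max ‖x‖ ‖z‖ ≤ R →
      Summable (fun l : {l : ℕ+ // l ≠ k} => |q k l x - q k l z|) ∧
      (∑' l : {l : ℕ+ // l ≠ k}, |q k l x - q k l z|) ≤ κ * ϱ (F ‖x - z‖)) :
    ∀ (k : ℕ+) (x z : EuclideanSpace ℝ (Fin d)),
      max ‖x‖ ‖z‖ ≤ R → 0 < ‖x - z‖ → ‖x - z‖ ≤ δ₀ →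
      (1 / 2) * Matrix.trace ((σ x k - σ z k) * (σ x k - σ z k)ᵀ * hessG d (x - z)) +
        ⟪b x k - b z k, gradG d (x - z)⟫ +
        (∫ u, (G d (x - z + c x k u - c z k u) - G d (x - z) -
          ⟪gradG d (x - z), c x k u - c z k u⟫) ∂ν) +
        (∑' l : {l : ℕ+ // l ≠ k}, |q k l x - q k l z|) ≤
        2 * κ * ϱ (F ‖x - z‖) := by
  intro k x z hxz hpos hδ
  obtain ⟨hint, hbound⟩ := hcoef k x z hxz hδ
  have hw : x - z ≠ 0 := norm_pos_iff.1 hpos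
  have htrace := trace_mul_transpose_mul_hessG_le (σ x k - σ z k) hw
  simp only [Matrix.sub_apply] at htrace
  have hgrad : ⟪b x k - b z k, gradG d (x - z)⟫ =
      (‖x - z‖ * (1 + ‖x - z‖) ^ 2)⁻¹ / 2 * (2 * ⟪x - z, b x k - b z k⟫) := by
    rw [gradG_eq hw, real_inner_smul_right, real_inner_comm]; ring
  have hjump := integral_G_add_sub_G_sub_inner_gradG_le ν hw
    (h := fun u => c x k u - c z k u) ((hmeas x k).sub (hmeas z k)).aestronglyMeasurable hint
  have hrho : (‖x - z‖ * (1 + ‖x - z‖) ^ 2)⁻¹ / 2 * (2 * κ * ‖x - z‖ * ϱ ‖x - z‖) ≤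
      κ * ϱ (F ‖x - z‖) := by
    calc _ = κ * (ϱ ‖x - z‖ / (1 + ‖x - z‖) ^ 2) := by field_simp
      _ ≤ κ * ϱ (F ‖x - z‖) := by
          gcongr
          rw [div_le_iff₀ (by positivity), mul_comm]
          exact hϱF _ hpos
  have hscaled := mul_le_mul_of_nonneg_left hbound
    (by positivity : 0 ≤ (‖x - z‖ * (1 + ‖x - z‖) ^ 2)⁻¹ / 2)
  simp only [add_sub_assoc] at hjump ⊢
  rw [hgrad]
  linarith [(hq k x z hxz).2]

theorem stmt_9 (d : ℕ) (hd : 2 ≤ d)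
    {U : Type*} [MeasurableSpace U] (ν : Measure U) [SigmaFinite ν]
    (δ₀ R κ : ℝ) (hδ₀ : 0 < δ₀) (hR : 0 < R) (hκ : 0 < κ)
    (ϱ : ℝ → ℝ) (hϱc : ContinuousOn ϱ (Set.Ici 0)) (hϱm : MonotoneOn ϱ (Set.Ici 0))
    (hϱconc : ConcaveOn ℝ (Set.Ici 0) ϱ) (hϱnn : ∀ r : ℝ, 0 ≤ r → 0 ≤ ϱ r)
    (hϱpos : ∀ r : ℝ, 0 < r → 0 < ϱ r)
    (hϱF : ∀ r : ℝ, 0 < r → ϱ r ≤ (1 + r) ^ 2 * ϱ (r / (1 + r)))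
    (b : EuclideanSpace ℝ (Fin d) → ℕ+ → EuclideanSpace ℝ (Fin d))
    (σ : EuclideanSpace ℝ (Fin d) → ℕ+ → Matrix (Fin d) (Fin d) ℝ)
    (c : EuclideanSpace ℝ (Fin d) → ℕ+ → U → EuclideanSpace ℝ (Fin d))
    (q : ℕ+ → ℕ+ → EuclideanSpace ℝ (Fin d) → ℝ)
    (hmeas : ∀ x k, Measurable (c x k))
    (hqnn : ∀ (k l : ℕ+), l ≠ k → ∀ x, 0 ≤ q k l x)
    -- (a)
    (hcoef : ∀ (k : ℕ+) (x z : EuclideanSpace ℝ (Fin d)),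
      max ‖x‖ ‖z‖ ≤ R → ‖x - z‖ ≤ δ₀ →
      Integrable (fun u =>
        min (‖c x k u - c z k u‖ ^ 2) (4 * ‖x - z‖ * ‖c x k u - c z k u‖)) ν ∧
      (∫ u, min (‖c x k u - c z k u‖ ^ 2) (4 * ‖x - z‖ * ‖c x k u - c z k u‖) ∂ν) +
        2 * ⟪x - z, b x k - b z k⟫ + (∑ i, ∑ j, (σ x k i j - σ z k i j) ^ 2) ≤
        2 * κ * ‖x - z‖ * ϱ ‖x - z‖)
    -- (b)
    (hq : ∀ (k : ℕ+) (x z : EuclideanSpace ℝ (Fin d)), max ‖x‖ ‖z‖ ≤ R →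
      Summable (fun l : {l : ℕ+ // l ≠ k} => |q k l x - q k l z|) ∧
      (∑' l : {l : ℕ+ // l ≠ k}, |q k l x - q k l z|) ≤ κ * ϱ (F ‖x - z‖)) :
    ∀ (k : ℕ+) (x z : EuclideanSpace ℝ (Fin d)),
      max ‖x‖ ‖z‖ ≤ R → 0 < ‖x - z‖ → ‖x - z‖ ≤ δ₀ →
      (1 / 2) * Matrix.trace ((σ x k - σ z k) * (σ x k - σ z k)ᵀ * hessG d (x - z)) +
        ⟪b x k - b z k, gradG d (x - z)⟫ +
        (∫ u, (G d (x - z + c x k u - c z k u) - G d (x - z) -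
          ⟪gradG d (x - z), c x k u - c z k u⟫) ∂ν) +
        (∑' l : {l : ℕ+ // l ≠ k}, |q k l x - q k l z|) ≤
        2 * κ * ϱ (F ‖x - z‖) :=
  stmt_9_general d ν δ₀ R κ hκ ϱ hϱF b σ c q hmeas hcoef hq
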